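/- Let K be an n×n real symmetric positive semidefinite matrix and C̄ ∈ R^{n×c} any matrix with rank(C̄) < n. Define δ^{ss} = (tr(K) − tr(C̄† K C̄))/(n − rank(C̄)) and U^{ss} = C̄† K (C̄†)^T − δ^{ss} (C̄^T C̄)†. Then the pair (U^{ss}, δ^{ss}) is a global minimizer of the function f(U, δ) = ‖K − C̄ U C̄^T − δ I_n‖_F² over all U ∈ R^{c×c} and δ ∈ R; that is, for every U ∈ R^{c×c} and δ ∈ R, ‖K − C̄ U^{ss} C̄^T − δ^{ss} I_n‖_F² ≤ ‖K − C̄ U C̄^T − δ I_n‖_F². -/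

import Mathlib

/-!
Let `P = C̄ C̄†`, the orthogonal projection onto the column space of `C̄`. The residual
`K - C̄ U C̄ᵀ - δ I` is the sum of `P (K - δ I) P - C̄ U C̄ᵀ` and `(K - P K P) - δ (I - P)`, which
are orthogonal for the trace inner product. The first summand vanishes at `U = Uˢˢ` because
`C̄ (C̄ᵀ C̄)† C̄ᵀ = P`; the second one is a least-squares problem in the single variable `δ`, whose
minimizer `⟪I - P, K - P K P⟫ / ‖I - P‖² = (tr K - tr (P K)) / (n - rank C̄)` is `δˢˢ`.

The pseudoinverse exists because `x ↦ x⁻¹` (with `0⁻¹ = 0`) applied to the symmetric matrix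
`Aᵀ A` by functional calculus gives a generalized inverse `T`, and then `T Aᵀ` satisfies the four
Penrose conditions for `A`.
-/

open Matrix BigOperators
open scoped Classical

noncomputable section

/-- `B` satisfies the four Penrose conditions for `A`. -/
def IsMoorePenrose {m n : Type*} [Fintype m] [Fintype n]
    (A : Matrix m n ℝ) (B : Matrix n m ℝ) : Prop :=
  A * B * A = A ∧ B * A * B = B ∧ (A * B)ᵀ = A * B ∧ (B * A)ᵀ = B * A

/-- The Moore–Penrose pseudoinverse of a real matrix (defined via the unique
matrix satisfying the four Penrose conditions, which always exists). -/
def pinv {m n : Type*} [Fintype m] [Fintype n] (A : Matrix m n ℝ) : Matrix n m ℝ :=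
  if h : ∃ B, IsMoorePenrose A B then h.choose else 0

/-- Squared Frobenius norm. -/
def frobSq {m n : Type*} [Fintype m] [Fintype n] (A : Matrix m n ℝ) : ℝ :=
  ∑ i, ∑ j, (A i j) ^ 2

/-- Frobenius norm. -/
def frobNorm {m n : Type*} [Fintype m] [Fintype n] (A : Matrix m n ℝ) : ℝ :=
  Real.sqrt (frobSq A)

/-- Eigenvalues of a (hermitian) real matrix, sorted in descending order
(junk value `0` if the matrix is not hermitian). -/
def eigsDesc {n : ℕ} (A : Matrix (Fin n) (Fin n) ℝ) : Fin n → ℝ :=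
  if hA : A.IsHermitian then
    fun i => hA.eigenvalues (Tuple.sort (fun j => -hA.eigenvalues j) i)
  else 0

/-- Singular values of a real matrix, sorted in descending order. -/
def svalsDesc {m n : ℕ} (A : Matrix (Fin m) (Fin n) ℝ) : Fin n → ℝ :=
  fun i => Real.sqrt (eigsDesc (Aᵀ * A) i)

/-- Spectral norm (largest singular value). -/
def specNorm {m n : ℕ} (A : Matrix (Fin m) (Fin n) ℝ) : ℝ := ⨆ i, svalsDesc A i

/-- `Ak` is a best rank-`k` approximation of `A` in Frobenius norm. -/
def IsBestRankApprox {m n : Type*} [Fintype m] [Fintype n]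
    (A Ak : Matrix m n ℝ) (k : ℕ) : Prop :=
  Ak.rank ≤ k ∧ ∀ X : Matrix m n ℝ, X.rank ≤ k → frobSq (A - Ak) ≤ frobSq (A - X)

/-- `P` is a column selection matrix: each column is a distinct standard basis vector. -/
def IsColSelection {n c : ℕ} (P : Matrix (Fin n) (Fin c) ℝ) : Prop :=
  ∃ f : Fin c → Fin n, Function.Injective f ∧
    P = Matrix.of fun i j => if i = f j then 1 else 0

/-- Adaptive sampling probabilities for a residual matrix `B`
(uniform in the degenerate case `B = 0`). -/
def adaptP {m n : Type*} [Fintype m] [Fintype n] (B : Matrix m n ℝ) : n → ℝ :=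
  fun j => if frobSq B = 0 then (Fintype.card n : ℝ)⁻¹ else (∑ i, (B i j) ^ 2) / frobSq B

/-- Uniform sampling matrix with entries `√(n/s)` at positions `(t j, j)`. -/
def uSamp (n : ℕ) {s : ℕ} (t : Fin s → Fin n) : Matrix (Fin n) (Fin s) ℝ :=
  Matrix.of fun i j => if i = t j then Real.sqrt ((n : ℝ) / s) else 0

/-- Weighted sampling matrix with entries `1/√(s p i)` at positions `(t j, j)`. -/
def wSamp {n s : ℕ} (p : Fin n → ℝ) (t : Fin s → Fin n) : Matrix (Fin n) (Fin s) ℝ :=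
  Matrix.of fun i j => if i = t j then 1 / Real.sqrt (s * p i) else 0

end

section MoorePenrose

variable {m n : Type*} [Fintype m] [Fintype n]

theorem Matrix.mul_eq_zero_of_transpose_mul_self_mul_eq_zero {k : Type*} {A : Matrix m n ℝ}
    {X : Matrix n k ℝ} (h : Aᵀ * A * X = 0) : A * X = 0 := by
  rw [← conjTranspose_mul_self_eq_zero, conjTranspose_eq_transpose_of_trivial, transpose_mul,
    Matrix.mul_assoc, ← Matrix.mul_assoc Aᵀ, h, Matrix.mul_zero]

theorem Matrix.mul_mul_transpose_mul_self_of_gInv {A : Matrix m n ℝ} {G : Matrix n n ℝ}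
    (hG : Aᵀ * A * G * (Aᵀ * A) = Aᵀ * A) : A * G * (Aᵀ * A) = A := by
  classical
  have h : A * (G * (Aᵀ * A) - 1) = 0 :=
    mul_eq_zero_of_transpose_mul_self_mul_eq_zero (by
      rw [Matrix.mul_sub, Matrix.mul_one, ← Matrix.mul_assoc, hG, sub_self])
  rwa [Matrix.mul_sub, Matrix.mul_one, ← Matrix.mul_assoc, sub_eq_zero] at h

theorem Matrix.exists_symm_commuting_reflexive_gInv {S : Matrix n n ℝ} (hS : IsSelfAdjoint S) :
    ∃ T : Matrix n n ℝ, Tᵀ = T ∧ T * S = S * T ∧ S * T * S = S ∧ T * S * T = T := by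
  classical
  have hmul (f g : ℝ → ℝ) : cfc f S * cfc g S = cfc (fun x => f x * g x) S :=
    (cfc_mul f g S (finite_real_spectrum.continuousOn f)
      (finite_real_spectrum.continuousOn g)).symm
  have hid : cfc (fun x : ℝ => x) S = S := cfc_id' ℝ S
  refine ⟨cfc (fun x : ℝ => x⁻¹) S, ?_, ?_, ?_, ?_⟩
  · rw [← conjTranspose_eq_transpose_of_trivial]
    exact (cfc_predicate (fun x : ℝ => x⁻¹) S : IsSelfAdjoint _)
  · nth_rw 2 [← hid]; nth_rw 3 [← hid]
    rw [hmul, hmul]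
    simp_rw [mul_comm]
  · nth_rw 1 [← hid]; nth_rw 3 [← hid]
    rw [hmul, hmul]
    simp_rw [mul_inv_mul_cancel, hid]
  · nth_rw 2 [← hid]
    rw [hmul, hmul]
    simp_rw [fun x : ℝ => show x⁻¹ * x * x⁻¹ = x⁻¹ by simpa using mul_inv_mul_cancel x⁻¹]

theorem exists_isMoorePenrose (A : Matrix m n ℝ) : ∃ B, IsMoorePenrose A B := by
  have hSt : (Aᵀ * A)ᵀ = Aᵀ * A := by rw [transpose_mul, transpose_transpose]
  have hS : IsSelfAdjoint (Aᵀ * A) := by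
    rwa [IsSelfAdjoint, star_eq_conjTranspose, conjTranspose_eq_transpose_of_trivial]
  obtain ⟨T, hT, hTS, hSTS, hTST⟩ := exists_symm_commuting_reflexive_gInv hS
  refine ⟨T * Aᵀ, ?_, ?_, ?_, ?_⟩
  · rw [← Matrix.mul_assoc, Matrix.mul_assoc _ Aᵀ, mul_mul_transpose_mul_self_of_gInv hSTS]
  · rw [show T * Aᵀ * A * (T * Aᵀ) = T * (Aᵀ * A) * T * Aᵀ by simp only [Matrix.mul_assoc],
      hTST]
  · rw [transpose_mul, transpose_mul, transpose_transpose, hT, Matrix.mul_assoc]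
  · rw [Matrix.mul_assoc, transpose_mul, hT, hSt, hTS]

theorem pinv_isMoorePenrose (A : Matrix m n ℝ) : IsMoorePenrose A (pinv A) := by
  rw [pinv, dif_pos (exists_isMoorePenrose A)]
  exact (exists_isMoorePenrose A).choose_spec

namespace IsMoorePenrose

variable {A : Matrix m n ℝ} {B : Matrix n m ℝ}

theorem isIdempotentElem_mul (h : IsMoorePenrose A B) : IsIdempotentElem (A * B) := by
  rw [IsIdempotentElem, ← Matrix.mul_assoc, h.1]

theorem rank_mul (h : IsMoorePenrose A B) : (A * B).rank = A.rank :=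
  le_antisymm (rank_mul_le_left A B) (by
    conv_lhs => rw [← h.1]
    exact rank_mul_le_left _ A)

theorem transpose_mul_mul (h : IsMoorePenrose A B) : Aᵀ * (A * B) = Aᵀ := by
  rw [← h.2.2.1, ← transpose_mul, h.1]

theorem mul_mul_transpose_eq (h : IsMoorePenrose A B) (U : Matrix n n ℝ) :
    A * B * (A * U * Aᵀ) * (A * B) = A * U * Aᵀ := by
  simp only [← Matrix.mul_assoc, h.1]
  rw [Matrix.mul_assoc _ _ B, Matrix.mul_assoc _ Aᵀ, h.transpose_mul_mul]

theorem mul_mul_mul_transpose (h : IsMoorePenrose A B) (K : Matrix m m ℝ) :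
    A * (B * K * Bᵀ) * Aᵀ = A * B * K * (A * B) := by
  simp only [Matrix.mul_assoc]
  rw [← transpose_mul, h.2.2.1]

theorem mul_gInv_mul_transpose {G : Matrix n n ℝ} (h : IsMoorePenrose A B)
    (hG : Aᵀ * A * G * (Aᵀ * A) = Aᵀ * A) : A * G * Aᵀ = A * B := by
  rw [← h.transpose_mul_mul, ← Matrix.mul_assoc, ← Matrix.mul_assoc, Matrix.mul_assoc (A * G),
    mul_mul_transpose_mul_self_of_gInv hG]

end IsMoorePenrose

end MoorePenrose

theorem Matrix.trace_eq_rank_of_isIdempotentElem {K n : Type*} [Field K] [Fintype n]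
    [DecidableEq n] {P : Matrix n n K} (hP : IsIdempotentElem P) : P.trace = P.rank := by
  have h : IsIdempotentElem (toLin' P) := hP.map (toLinAlgEquiv' (R := K))
  rw [Matrix.rank, ← Matrix.trace_toLin'_eq, (LinearMap.IsIdempotentElem.isProj_range _ h).trace]
  rfl

section Frobenius

variable {m n : Type*} [Fintype m] [Fintype n]

theorem frobSq_eq_trace (A : Matrix m n ℝ) : frobSq A = (Aᵀ * A).trace := by
  rw [frobSq, Matrix.trace, Finset.sum_comm]
  simp [Matrix.mul_apply, sq]

theorem frobSq_nonneg (A : Matrix m n ℝ) : 0 ≤ frobSq A :=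
  Finset.sum_nonneg fun _ _ => Finset.sum_nonneg fun _ _ => sq_nonneg _

theorem frobSq_eq_zero_iff {A : Matrix m n ℝ} : frobSq A = 0 ↔ A = 0 := by
  rw [frobSq_eq_trace, ← conjTranspose_eq_transpose_of_trivial,
    trace_conjTranspose_mul_self_eq_zero_iff]

theorem frobSq_smul (c : ℝ) (A : Matrix m n ℝ) : frobSq (c • A) = c ^ 2 * frobSq A := by
  simp only [frobSq, Matrix.smul_apply, smul_eq_mul, mul_pow, Finset.mul_sum]

theorem trace_transpose_mul_comm (X Y : Matrix m n ℝ) : (Xᵀ * Y).trace = (Yᵀ * X).trace := by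
  rw [← trace_transpose, transpose_mul, transpose_transpose]

theorem frobSq_add (X Y : Matrix m n ℝ) :
    frobSq (X + Y) = frobSq X + 2 * (Xᵀ * Y).trace + frobSq Y := by
  simp only [frobSq_eq_trace, transpose_add, Matrix.add_mul, Matrix.mul_add, trace_add,
    trace_transpose_mul_comm Y X]
  ring

theorem frobSq_add_of_compress {P X Y : Matrix n n ℝ} (hP : Pᵀ = P) (hX : P * X * P = X)
    (hY : P * Y * P = 0) : frobSq (X + Y) = frobSq X + frobSq Y := by
  have hcross : (Xᵀ * Y).trace = 0 := by
    calc (Xᵀ * Y).trace = (P * (Xᵀ * (P * Y))).trace := by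
          conv_lhs => rw [← hX]
          simp only [transpose_mul, hP, Matrix.mul_assoc]
      _ = (Xᵀ * (P * Y * P)).trace := by
          rw [trace_mul_comm]; simp only [Matrix.mul_assoc]
      _ = 0 := by rw [hY, Matrix.mul_zero, trace_zero]
  rw [frobSq_add, hcross, mul_zero, add_zero]

theorem frobSq_sub_smul_le (R Q : Matrix m n ℝ) (δ : ℝ) :
    frobSq (R - ((Qᵀ * R).trace / frobSq Q) • Q) ≤ frobSq (R - δ • Q) := by
  rcases eq_or_ne Q 0 with rfl | hQ
  · simp
  have hq : 0 < frobSq Q := (frobSq_nonneg Q).lt_of_ne' (frobSq_eq_zero_iff.not.2 hQ)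
  have hexp (t : ℝ) :
      frobSq (R - t • Q) = frobSq R - 2 * t * (Qᵀ * R).trace + t ^ 2 * frobSq Q := by
    rw [sub_eq_add_neg, frobSq_add, ← neg_smul, frobSq_smul, Matrix.mul_smul, trace_smul,
      trace_transpose_mul_comm, smul_eq_mul]
    ring
  rw [hexp, hexp]
  have hsq : 0 ≤ (δ * frobSq Q - (Qᵀ * R).trace) ^ 2 := sq_nonneg _
  field_simp
  nlinarith

end Frobenius

section Projection

variable {n : Type*} [Fintype n] [DecidableEq n] {P : Matrix n n ℝ}

theorem frobSq_sub_sub_smul_one (hPt : Pᵀ = P) (hP : IsIdempotentElem P) {W : Matrix n n ℝ}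
    (hW : P * W * P = W) (K : Matrix n n ℝ) (δ : ℝ) :
    frobSq (K - W - δ • 1) =
      frobSq (P * K * P - δ • P - W) + frobSq (K - P * K * P - δ • (1 - P)) := by
  have hPP (X : Matrix n n ℝ) : P * (P * X) = P * X := by rw [← Matrix.mul_assoc, hP.eq]
  rw [Matrix.mul_assoc] at hW
  rw [← frobSq_add_of_compress hPt]
  · congr 1
    module
  · simp only [Matrix.mul_sub, Matrix.sub_mul, Matrix.mul_smul, Matrix.smul_mul,
      Matrix.mul_assoc, hPP, hP.eq, hW]
  · simp only [Matrix.mul_sub, Matrix.sub_mul, Matrix.mul_smul, Matrix.mul_assoc, Matrix.mul_one,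
      hPP, hP.eq, sub_self, smul_zero, Matrix.zero_mul]

theorem trace_transpose_mul_div_frobSq_one_sub (hPt : Pᵀ = P) (hP : IsIdempotentElem P)
    (K : Matrix n n ℝ) :
    ((1 - P)ᵀ * (K - P * K * P)).trace / frobSq (1 - P) =
      (K.trace - (P * K).trace) / (Fintype.card n - P.trace) := by
  have hQt : (1 - P)ᵀ = 1 - P := by rw [transpose_sub, transpose_one, hPt]
  have hnum : (1 - P) * (K - P * K * P) = K - P * K := by
    simp only [Matrix.sub_mul, Matrix.mul_sub, Matrix.one_mul, ← Matrix.mul_assoc, hP.eq]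
    abel
  rw [frobSq_eq_trace, hQt, hP.one_sub.eq, hnum, trace_sub, trace_sub, trace_one]

end Projection

theorem spectral_shifting_optimal_general {n c : ℕ}
    (K : Matrix (Fin n) (Fin n) ℝ)
    (Cbar : Matrix (Fin n) (Fin c) ℝ)
    (δss : ℝ) (hδss : δss = (K.trace - (pinv Cbar * K * Cbar).trace) / ((n : ℝ) - Cbar.rank))
    (Uss : Matrix (Fin c) (Fin c) ℝ)
    (hUss : Uss = pinv Cbar * K * (pinv Cbar)ᵀ - δss • pinv (Cbarᵀ * Cbar)) :
    ∀ (U : Matrix (Fin c) (Fin c) ℝ) (δ : ℝ),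
      frobSq (K - Cbar * Uss * Cbarᵀ - δss • (1 : Matrix (Fin n) (Fin n) ℝ)) ≤
        frobSq (K - Cbar * U * Cbarᵀ - δ • (1 : Matrix (Fin n) (Fin n) ℝ)) := by
  intro U δ
  have hC := pinv_isMoorePenrose Cbar
  set P := Cbar * pinv Cbar
  have hPt : Pᵀ = P := hC.2.2.1
  have hP : IsIdempotentElem P := hC.isIdempotentElem_mul
  have hUss' : Cbar * Uss * Cbarᵀ = P * K * P - δss • P := by
    rw [hUss, Matrix.mul_sub, Matrix.sub_mul, Matrix.mul_smul, Matrix.smul_mul,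
      hC.mul_mul_mul_transpose, hC.mul_gInv_mul_transpose (pinv_isMoorePenrose _).1]
  have hδss' : δss = ((1 - P)ᵀ * (K - P * K * P)).trace / frobSq (1 - P) := by
    rw [trace_transpose_mul_div_frobSq_one_sub hPt hP, trace_eq_rank_of_isIdempotentElem hP,
      hC.rank_mul, Fintype.card_fin, ← trace_mul_cycle, hδss]
  rw [frobSq_sub_sub_smul_one hPt hP (hC.mul_mul_transpose_eq Uss),
    frobSq_sub_sub_smul_one hPt hP (hC.mul_mul_transpose_eq U), hUss', sub_self,
    frobSq_eq_zero_iff.2 rfl, zero_add, hδss']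
  exact (frobSq_sub_smul_le _ _ δ).trans (le_add_of_nonneg_left (frobSq_nonneg _))

/-- The pair `(Uss, δss)` is a global minimizer of
`(U, δ) ↦ ‖K − C̄ U C̄ᵀ − δ Iₙ‖_F²`. -/
theorem spectral_shifting_optimal {n c : ℕ}
    (K : Matrix (Fin n) (Fin n) ℝ) (hK : K.PosSemidef)
    (Cbar : Matrix (Fin n) (Fin c) ℝ) (hrank : Cbar.rank < n)
    (δss : ℝ) (hδss : δss = (K.trace - (pinv Cbar * K * Cbar).trace) / ((n : ℝ) - Cbar.rank))
    (Uss : Matrix (Fin c) (Fin c) ℝ)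
    (hUss : Uss = pinv Cbar * K * (pinv Cbar)ᵀ - δss • pinv (Cbarᵀ * Cbar)) :
    ∀ (U : Matrix (Fin c) (Fin c) ℝ) (δ : ℝ),
      frobSq (K - Cbar * Uss * Cbarᵀ - δss • (1 : Matrix (Fin n) (Fin n) ℝ)) ≤
        frobSq (K - Cbar * U * Cbarᵀ - δ • (1 : Matrix (Fin n) (Fin n) ℝ)) :=
  spectral_shifting_optimal_general K Cbar δss hδss Uss hUss
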